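/- arXiv:2010.06071 — 2 statements merged into one kernel-verified Lean document; each statement's English description precedes it below -/
import Mathlib

section
/- For an isolated surface singularity g : (ℂ³,0) → (ℂ,0), a 2-dimensional compact face of the Newton boundary Γ(g) can be exceptional with respect to at most one coordinate axis; that is, E_x(g) ∩ E_y(g) = ∅, E_x(g) ∩ E_z(g) = ∅, and E_y(g) ∩ E_z(g) = ∅. -/
open MvPowerSeries

/-- `v`-weighted degree of an exponent. -/
noncomputable def wdeg3 (v : Fin 3 → ℕ) (α : Fin 3 →₀ ℕ) : ℕ := ∑ i, v i * α i

/-- The `v`-order of a power series: minimal `v`-weighted degree on the support. -/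
noncomputable def vord3 (v : Fin 3 → ℕ) (f : MvPowerSeries (Fin 3) ℂ) : ℕ :=
  sInf {w | ∃ α, MvPowerSeries.coeff α f ≠ 0 ∧ wdeg3 v α = w}

/-- The initial form `f_S` of `f` on the face `S` supported by a positive vector `v`:
the (polynomial) sum of the terms of `f` of minimal `v`-weighted degree. -/
noncomputable def inForm (v : Fin 3 → ℕ) (f : MvPowerSeries (Fin 3) ℂ) :
    MvPolynomial (Fin 3) ℂ :=
  ∑ α ∈ Finset.Iic ((Finsupp.equivFunOnFinite.symm fun _ => vord3 v f : Fin 3 →₀ ℕ)),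
    if wdeg3 v α = vord3 v f then MvPolynomial.monomial α (MvPowerSeries.coeff α f) else 0

/-- The formal partial derivative of a power series in three variables. -/
noncomputable def pdPS (i : Fin 3) (f : MvPowerSeries (Fin 3) ℂ) : MvPowerSeries (Fin 3) ℂ :=
  fun α => ((α i : ℂ) + 1) * MvPowerSeries.coeff (α + Finsupp.single i 1) f

/-- `f` defines an isolated singularity at `0`: `f(0) = 0`, `∇f(0) = 0`, and the Milnor
algebra is finite dimensional (equivalently, `∇f` has an isolated zero at `0`). -/
def IsIsolatedSing (f : MvPowerSeries (Fin 3) ℂ) : Prop :=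
  MvPowerSeries.coeff 0 f = 0 ∧ (∀ i, MvPowerSeries.coeff 0 (pdPS i f) = 0) ∧
    FiniteDimensional ℂ
      (MvPowerSeries (Fin 3) ℂ ⧸ Ideal.span {pdPS 0 f, pdPS 1 f, pdPS 2 f})

/-- Kushnirenko (`H`-) non-degeneracy: for every compact face (cut out by a supporting
vector with positive coordinates), the partial derivatives of the face polynomial have no
common zero in the torus `(ℂ*)³`. -/
def HNonDeg (f : MvPowerSeries (Fin 3) ℂ) : Prop :=
  ∀ v : Fin 3 → ℕ, (∀ i, 0 < v i) →
    ¬ ∃ z : Fin 3 → ℂ, (∀ i, z i ≠ 0) ∧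
      ∀ i, MvPolynomial.eval z (MvPolynomial.pderiv i (inForm v f)) = 0

/-- Composition (substitution) `f ∘ Φ` of a power series in `n` variables with an `n`-tuple of
one-variable power series with zero constant term. -/
noncomputable def compPS {n : ℕ} (f : MvPowerSeries (Fin n) ℂ) (Φ : Fin n → PowerSeries ℂ) :
    PowerSeries ℂ :=
  PowerSeries.mk fun m =>
    ∑ α ∈ Finset.Iic ((Finsupp.equivFunOnFinite.symm fun _ => m : Fin n →₀ ℕ)),
      MvPowerSeries.coeff α f * PowerSeries.coeff m (∏ i, (Φ i) ^ (α i))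

/-- The Newton polytope of a polynomial in three variables. -/
noncomputable def newtonPolytope3 (F : MvPolynomial (Fin 3) ℂ) : Set (Fin 3 → ℝ) :=
  convexHull ℝ ((fun (α : Fin 3 →₀ ℕ) (i : Fin 3) => (α i : ℝ)) '' (F.support : Set (Fin 3 →₀ ℕ)))

/-- The face polynomial `F` is exceptional with respect to the axis `0x_i`: some partial
derivative `∂F/∂z_j` with `j ≠ i` is a (nonzero multiple of a) pure power of `z_i`. -/
def IsExceptional (i : Fin 3) (F : MvPolynomial (Fin 3) ℂ) : Prop :=
  ∃ j, j ≠ i ∧ ∃ (c : ℂ) (m : ℕ), c ≠ 0 ∧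
    MvPolynomial.pderiv j F = MvPolynomial.monomial (Finsupp.single i m) c


/-- Coefficient of a formal partial derivative. -/
lemma aux_coeff_pderiv (j : Fin 3) (F : MvPolynomial (Fin 3) ℂ) (β : Fin 3 →₀ ℕ) :
    MvPolynomial.coeff β (MvPolynomial.pderiv j F) =
      ((β j : ℂ) + 1) * MvPolynomial.coeff (β + Finsupp.single j 1) F := by
  induction F using MvPolynomial.induction_on' with
  | add p q hp hq => simp [map_add, hp, hq, mul_add]
  | monomial s a =>
    rw [MvPolynomial.pderiv_monomial, MvPolynomial.coeff_monomial,
      MvPolynomial.coeff_monomial]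
    by_cases h : s = β + Finsupp.single j 1
    · subst h
      have h1 : β + Finsupp.single j 1 - Finsupp.single j 1 = β :=
        add_tsub_cancel_right β (Finsupp.single j 1)
      have h2 : ((β + Finsupp.single j 1 : Fin 3 →₀ ℕ) j : ℂ) = (β j : ℂ) + 1 := by
        rw [Finsupp.add_apply, Finsupp.single_eq_same]
        push_cast
        ring
      rw [if_pos h1, if_pos rfl, h2]
      ring
    · rw [if_neg h]
      by_cases h2 : s - Finsupp.single j 1 = β
      · rw [if_pos h2]
        by_cases h3 : s j = 0
        · simp [h3]
        · exfalso
          apply h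
          rw [← h2]
          have : Finsupp.single j 1 ≤ s := by
            rw [Finsupp.single_le_iff]; omega
          rw [tsub_add_cancel_of_le this]
      · rw [if_neg h2, mul_zero]

/-- The support of the initial form consists of exponents with nonzero coefficient in `g`
and of minimal weighted degree. -/
lemma aux_supp (v : Fin 3 → ℕ) (g : MvPowerSeries (Fin 3) ℂ) (α : Fin 3 →₀ ℕ)
    (hα : MvPolynomial.coeff α (inForm v g) ≠ 0) :
    MvPowerSeries.coeff α g ≠ 0 ∧ wdeg3 v α = vord3 v g := by
  by_contra hcon
  apply hα
  unfold inForm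
  rw [MvPolynomial.coeff_sum]
  apply Finset.sum_eq_zero
  intro β _
  split_ifs with h
  · rw [MvPolynomial.coeff_monomial]
    split_ifs with h2
    · subst h2
      by_contra hg
      exact hcon ⟨hg, h⟩
    · rfl
  · exact MvPolynomial.coeff_zero _

/-- Structure of the support of `F` when `pderiv j F` is a monomial. -/
lemma aux_excep (j : Fin 3) (F : MvPolynomial (Fin 3) ℂ) (μ : Fin 3 →₀ ℕ) (c : ℂ)
    (hc : c ≠ 0) (hder : MvPolynomial.pderiv j F = MvPolynomial.monomial μ c) :
    MvPolynomial.coeff (μ + Finsupp.single j 1) F ≠ 0 ∧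
      ∀ α, MvPolynomial.coeff α F ≠ 0 → α j ≠ 0 → α = μ + Finsupp.single j 1 := by
  constructor
  · have h1 := aux_coeff_pderiv j F μ
    rw [hder, MvPolynomial.coeff_monomial, if_pos rfl] at h1
    intro h0
    rw [h0, mul_zero] at h1
    exact hc h1
  · intro α hα hαj
    by_contra hne
    have hle : Finsupp.single j 1 ≤ α := by
      rw [Finsupp.single_le_iff]; omega
    have hβ : (α - Finsupp.single j 1) + Finsupp.single j 1 = α :=
      tsub_add_cancel_of_le hle
    have h1 := aux_coeff_pderiv j F (α - Finsupp.single j 1)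
    rw [hder, MvPolynomial.coeff_monomial, hβ] at h1
    have hμ : μ ≠ α - Finsupp.single j 1 := by
      intro h
      apply hne
      rw [← hβ, h]
    rw [if_neg hμ] at h1
    have hz : (((α - Finsupp.single j 1 : Fin 3 →₀ ℕ) j : ℂ) + 1) ≠ 0 :=
      Nat.cast_add_one_ne_zero _
    rcases mul_eq_zero.mp h1.symm with h | h
    · exact hz h
    · exact hα h

/-- Collinearity passes to convex hulls. -/
lemma aux_collinear_convexHull {s : Set (Fin 3 → ℝ)} (h : Collinear ℝ s) :
    Collinear ℝ (convexHull ℝ s) := by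
  unfold Collinear at *
  rw [← direction_affineSpan] at h ⊢
  rwa [affineSpan_convexHull]

theorem stmt_9 (g : MvPowerSeries (Fin 3) ℂ) (hiso : IsIsolatedSing g)
    (v : Fin 3 → ℕ) (hv : ∀ i, 0 < v i)
    (hdim : ¬ Collinear ℝ (newtonPolytope3 (inForm v g)))
    (i i' : Fin 3) (hii' : i ≠ i') :
    ¬ (IsExceptional i (inForm v g) ∧ IsExceptional i' (inForm v g)) := by
  rintro ⟨⟨j, hj, c, m, hc, hder⟩, ⟨j', hj', c', m', hc', hder'⟩⟩
  set F := inForm v g with hF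
  set D := vord3 v g with hD
  obtain ⟨h0g, hling, -⟩ := hiso
  -- no linear terms in g
  have hl : ∀ l : Fin 3, MvPowerSeries.coeff (Finsupp.single l 1) g = 0 := by
    intro l
    have h1 := hling l
    rw [MvPowerSeries.coeff_apply] at h1
    simp only [pdPS] at h1
    simpa using h1
  -- support of F avoids 0 and the unit vectors
  have hne0 : ∀ α : Fin 3 →₀ ℕ, MvPolynomial.coeff α F ≠ 0 →
      α ≠ 0 ∧ ∀ l, α ≠ Finsupp.single l 1 := by
    intro α hα
    obtain ⟨hg, -⟩ := aux_supp v g α hα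
    constructor
    · rintro rfl; exact hg h0g
    · rintro l rfl; exact hg (hl l)
  obtain ⟨h1, hu⟩ := aux_excep j F (Finsupp.single i m) c hc hder
  obtain ⟨h1', hu'⟩ := aux_excep j' F (Finsupp.single i' m') c' hc' hder'
  set p : Fin 3 →₀ ℕ := Finsupp.single i m + Finsupp.single j 1 with hp
  set p' : Fin 3 →₀ ℕ := Finsupp.single i' m' + Finsupp.single j' 1 with hp'
  have papp : ∀ (a b : Fin 3) (n : ℕ) (l : Fin 3),
      ((Finsupp.single a n + Finsupp.single b 1 : Fin 3 →₀ ℕ) l)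
        = (if a = l then n else 0) + (if b = l then 1 else 0) := by
    intro a b n l
    rw [Finsupp.add_apply, Finsupp.single_apply, Finsupp.single_apply]
  by_cases hjj' : j = j'
  · -- same witness variable: the apexes coincide, forcing a linear monomial
    have hp'j : p' j ≠ 0 := by
      rw [hp', papp, if_pos hjj'.symm]
      omega
    have hpp' : p' = p := hu p' h1' hp'j
    have hji : j' ≠ i := fun h => hj (hjj' ▸ h)
    have e1 : p i = m := by
      rw [hp, papp, if_pos rfl, if_neg hj]
      omega
    have e2 : p' i = 0 := by
      rw [hp', papp, if_neg (Ne.symm hii'), if_neg hji]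
    have hm : m = 0 := by
      have h3 : p' i = p i := congrArg (fun f : Fin 3 →₀ ℕ => f i) hpp'
      rw [e1, e2] at h3
      omega
    exact (hne0 p h1).2 j (by rw [hp, hm, Finsupp.single_zero, zero_add])
  · -- different witness variables
    by_cases hji' : j = i'
    · by_cases hj'i : j' = i
      · -- case A : j = i', j' = i
        have hm : m ≠ 0 := by
          intro hm
          exact (hne0 p h1).2 j (by rw [hp, hm, Finsupp.single_zero, zero_add])
        have hpj' : p j' ≠ 0 := by
          rw [hp, papp, if_pos hj'i.symm, if_neg hjj']
          omega
        have hpp' : p = p' := hu' p h1 hpj'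
        have key : ∀ a b : Fin 3, a ≠ b → ∃ k, k ≠ a ∧ k ≠ b ∧
            ∀ l : Fin 3, l = a ∨ l = b ∨ l = k := by decide
        obtain ⟨k, hki, hki', hall⟩ := key i i' hii'
        have claim : ∀ α : Fin 3 →₀ ℕ, MvPolynomial.coeff α F ≠ 0 →
            α = p ∨ α = Finsupp.single k (D / v k) := by
          intro α hα
          by_cases hαp : α = p
          · exact Or.inl hαp
          right
          have hαi' : α i' = 0 := by
            by_contra h
            have hαj : α j ≠ 0 := by rw [hji']; exact h
            exact hαp (hu α hα hαj)
          have hαi : α i = 0 := by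
            by_contra h
            have hαj' : α j' ≠ 0 := by rw [hj'i]; exact h
            exact hαp ((hu' α hα hαj').trans hpp'.symm)
          have hwd : wdeg3 v α = D := (aux_supp v g α hα).2
          have hsum : wdeg3 v α = v k * α k := by
            unfold wdeg3
            apply Finset.sum_eq_single_of_mem k (Finset.mem_univ k)
            intro b _ hb
            rcases hall b with rfl | rfl | rfl
            · rw [hαi, mul_zero]
            · rw [hαi', mul_zero]
            · exact absurd rfl hb
          have hαk : α k = D / v k := by
            rw [← hwd, hsum, Nat.mul_div_cancel_left _ (hv k)]
          ext l
          rcases hall l with rfl | rfl | rfl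
          · rw [hαi, Finsupp.single_apply, if_neg hki]
          · rw [hαi', Finsupp.single_apply, if_neg hki']
          · rw [Finsupp.single_apply, if_pos rfl, hαk]
        apply hdim
        unfold newtonPolytope3
        apply aux_collinear_convexHull
        apply Collinear.subset ?_ (collinear_pair ℝ
          (fun l => ((p l : ℝ))) (fun l => ((Finsupp.single k (D / v k) l : ℝ))))
        rintro x ⟨α, hα, rfl⟩
        rcases claim α (MvPolynomial.mem_support_iff.mp hα) with rfl | rfl
        · exact Set.mem_insert _ _
        · exact Set.mem_insert_of_mem _ rfl
      · -- case B : j = i', j' ∉ {i, i'}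
        have hm' : m' ≠ 0 := by
          intro hm'
          exact (hne0 p' h1').2 j'
            (by rw [hp', hm', Finsupp.single_zero, zero_add])
        have hp'j : p' j ≠ 0 := by
          rw [hp', papp, if_pos hji'.symm, if_neg (Ne.symm hjj')]
          omega
        have hpp' : p' = p := hu p' h1' hp'j
        have e1 : p' j' = 1 := by
          rw [hp', papp, if_neg (fun h => hj' h.symm), if_pos rfl]
        have e2 : p j' = 0 := by
          rw [hp, papp, if_neg (fun h => hj'i h.symm), if_neg hjj']
        have h3 : p' j' = p j' := congrArg (fun f : Fin 3 →₀ ℕ => f j') hpp'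
        rw [e1, e2] at h3
        exact Nat.one_ne_zero h3
    · by_cases hj'i : j' = i
      · -- case C : j' = i, j ∉ {i, i'}
        have hm : m ≠ 0 := by
          intro hm
          exact (hne0 p h1).2 j (by rw [hp, hm, Finsupp.single_zero, zero_add])
        have hpj : p j' ≠ 0 := by
          rw [hp, papp, if_pos hj'i.symm, if_neg hjj']
          omega
        have hpp' : p = p' := hu' p h1 hpj
        have e1 : p j = 1 := by
          rw [hp, papp, if_neg (Ne.symm hj), if_pos rfl]
        have e2 : p' j = 0 := by
          rw [hp', papp, if_neg (fun h => hji' h.symm), if_neg (Ne.symm hjj')]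
        have h3 : p j = p' j := congrArg (fun f : Fin 3 →₀ ℕ => f j) hpp'
        rw [e1, e2] at h3
        exact Nat.one_ne_zero h3
      · -- impossible : j, j' both avoid {i, i'} and each other in Fin 3
        have b1 := i.isLt; have b2 := i'.isLt; have b3 := j.isLt; have b4 := j'.isLt
        have e1 : j.val ≠ i.val := fun h => hj (Fin.val_injective h)
        have e2 : j'.val ≠ i'.val := fun h => hj' (Fin.val_injective h)
        have e3 : i.val ≠ i'.val := fun h => hii' (Fin.val_injective h)
        have e4 : j.val ≠ j'.val := fun h => hjj' (Fin.val_injective h)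
        have e5 : j.val ≠ i'.val := fun h => hji' (Fin.val_injective h)
        have e6 : j'.val ≠ i.val := fun h => hj'i (Fin.val_injective h)
        omega
end

section
/- Let f : (ℂ³,0) → (ℂ,0) be an isolated singularity whose support contains the monomial x^k (k ≥ 2) and such that f* := f − e·x^k (removing the x^k term, e ≠ 0 its coefficient) is not nearly convenient with respect to the axis 0x. Then the path Φ(t) = (t, 0, 0) satisfies ∂f/∂y ∘ Φ = 0 and ∂f/∂z ∘ Φ = 0, and ord(∂f/∂x ∘ Φ) = k − 1; consequently the Łojasiewicz exponent satisfies L₀(f) ≥ k − 1. -/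
open MvPowerSeries

/-- The path `Φ(t) = (t, 0, 0)`. -/
noncomputable def pathX : Fin 3 → PowerSeries ℂ := ![PowerSeries.X, 0, 0]

lemma constantCoeff_pathX (i : Fin 3) : PowerSeries.constantCoeff (pathX i) = 0 := by
  fin_cases i <;> simp [pathX]

lemma pathX_zero_ne_zero : pathX 0 ≠ 0 := by
  simp [pathX]

lemma iInf_order_pathX : ⨅ i, (pathX i).order = 1 := by
  refine le_antisymm ((iInf_le _ 0).trans (by simp [pathX])) (le_iInf fun i => ?_)
  fin_cases i <;> simp [pathX]

lemma coeff_compPS_pathX (g : MvPowerSeries (Fin 3) ℂ) (m : ℕ) :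
    PowerSeries.coeff m (compPS g pathX) = MvPowerSeries.coeff (Finsupp.single 0 m) g := by
  rw [compPS, PowerSeries.coeff_mk, Finset.sum_eq_single (Finsupp.single (0 : Fin 3) m)]
  · simp [pathX, Fin.prod_univ_three, PowerSeries.coeff_X_pow]
  · intro α _ hne
    rcases Nat.eq_zero_or_pos (α 1) with h1 | h1
    · rcases Nat.eq_zero_or_pos (α 2) with h2 | h2
      · have h0 : α 0 ≠ m := fun h0 => hne <| by
          ext j
          fin_cases j <;> simp [h0, h1, h2]
        simp [pathX, Fin.prod_univ_three, h1, h2, PowerSeries.coeff_X_pow, Ne.symm h0]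
      · simp [pathX, Fin.prod_univ_three, zero_pow h2.ne']
    · simp [pathX, Fin.prod_univ_three, zero_pow h1.ne']
  · intro h
    refine absurd (Finset.mem_Iic.mpr fun j => ?_) h
    simp only [Finsupp.single_apply]
    split <;> simp

lemma coeff_compPS_pdPS_pathX (i : Fin 3) (g : MvPowerSeries (Fin 3) ℂ) (m : ℕ) :
    PowerSeries.coeff m (compPS (pdPS i g) pathX) =
      ((Finsupp.single 0 m i : ℂ) + 1) *
        MvPowerSeries.coeff (Finsupp.single 0 m + Finsupp.single i 1) g :=
  coeff_compPS_pathX _ m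

/-- The paper's condition that `f - e x^k` is not nearly convenient with respect to `0x`,
read off the support of `f`. -/
def NotNearlyConvenientX (f : MvPowerSeries (Fin 3) ℂ) (k : ℕ) : Prop :=
  ∀ α : Fin 3 →₀ ℕ, MvPowerSeries.coeff α f ≠ 0 → α ≠ Finsupp.single 0 k → 2 ≤ α 1 + α 2

namespace NotNearlyConvenientX

variable {f : MvPowerSeries (Fin 3) ℂ} {k : ℕ}

lemma coeff_single_zero_eq_zero (h : NotNearlyConvenientX f k) {n : ℕ} (hn : n ≠ k) :
    MvPowerSeries.coeff (Finsupp.single 0 n) f = 0 := by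
  by_contra hc
  have := h _ hc fun h' => hn (Finsupp.single_injective _ h')
  simp at this

lemma coeff_single_zero_add_single_eq_zero (h : NotNearlyConvenientX f k) {i : Fin 3}
    (hi : i ≠ 0) (m : ℕ) :
    MvPowerSeries.coeff (Finsupp.single 0 m + Finsupp.single i 1) f = 0 := by
  by_contra hc
  have hne : Finsupp.single 0 m + Finsupp.single i 1 ≠ Finsupp.single 0 k := fun h' => by
    simpa [Finsupp.single_apply, hi, Ne.symm hi] using congrArg (· i) h'
  have := h _ hc hne
  fin_cases i <;> simp_all

lemma compPS_pdPS_pathX_eq_zero (h : NotNearlyConvenientX f k) {i : Fin 3} (hi : i ≠ 0) :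
    compPS (pdPS i f) pathX = 0 := by
  ext m
  rw [coeff_compPS_pdPS_pathX, h.coeff_single_zero_add_single_eq_zero hi, mul_zero, map_zero]

lemma order_compPS_pdPS_zero_pathX (h : NotNearlyConvenientX f k) (hk : 1 ≤ k)
    (hcoeff : MvPowerSeries.coeff (Finsupp.single 0 k) f ≠ 0) :
    (compPS (pdPS 0 f) pathX).order = (k - 1 : ℕ) := by
  have hx : ∀ m : ℕ, PowerSeries.coeff m (compPS (pdPS 0 f) pathX) =
      ((m : ℂ) + 1) * MvPowerSeries.coeff (Finsupp.single 0 (m + 1)) f := fun m => by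
    rw [coeff_compPS_pdPS_pathX, ← Finsupp.single_add]
    simp
  rw [PowerSeries.order_eq_nat]
  refine ⟨?_, fun i hi => ?_⟩
  · rw [hx, Nat.sub_add_cancel hk]
    exact mul_ne_zero (by exact_mod_cast (Nat.succ_pos (k - 1)).ne') hcoeff
  · rw [hx, h.coeff_single_zero_eq_zero (by omega), mul_zero]

end NotNearlyConvenientX

theorem stmt_19_general (f : MvPowerSeries (Fin 3) ℂ)
    (k : ℕ) (hk : 2 ≤ k) (e : ℂ) (he : e ≠ 0)
    (hcoeff : MvPowerSeries.coeff (Finsupp.single 0 k) f = e)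
    -- `f - e·x^k` is not nearly convenient with respect to `0x`: every other monomial of `f`
    -- has `y`-degree plus `z`-degree at least `2`.
    (hnnc : ∀ α : Fin 3 →₀ ℕ, MvPowerSeries.coeff α f ≠ 0 → α ≠ Finsupp.single 0 k →
      2 ≤ α 1 + α 2) :
    compPS (pdPS 1 f) pathX = 0 ∧
    compPS (pdPS 2 f) pathX = 0 ∧
    (compPS (pdPS 0 f) pathX).order = (k - 1 : ℕ) ∧
    -- consequently `L₀(f) ≥ k − 1`, witnessed by a path:
    ∃ Φ : Fin 3 → PowerSeries ℂ, (∀ i, PowerSeries.constantCoeff (Φ i) = 0) ∧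
      (∃ i, Φ i ≠ 0) ∧
      ((k : ℕ∞) - 1) * (⨅ i, (Φ i).order) ≤ ⨅ i, (compPS (pdPS i f) Φ).order := by
  have hnnc : NotNearlyConvenientX f k := hnnc
  have hy := hnnc.compPS_pdPS_pathX_eq_zero (i := 1) (by decide)
  have hz := hnnc.compPS_pdPS_pathX_eq_zero (i := 2) (by decide)
  have hx := hnnc.order_compPS_pdPS_zero_pathX (by omega) (hcoeff ▸ he)
  refine ⟨hy, hz, hx, pathX, constantCoeff_pathX, ⟨0, pathX_zero_ne_zero⟩, ?_⟩
  rw [iInf_order_pathX, mul_one]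
  refine le_iInf fun i => ?_
  fin_cases i
  · simp [hx]
  · simp [hy]
  · simp [hz]

theorem stmt_19 (f : MvPowerSeries (Fin 3) ℂ) (hiso : IsIsolatedSing f)
    (k : ℕ) (hk : 2 ≤ k) (e : ℂ) (he : e ≠ 0)
    (hcoeff : MvPowerSeries.coeff (Finsupp.single 0 k) f = e)
    -- `f - e·x^k` is not nearly convenient with respect to `0x`: every other monomial of `f`
    -- has `y`-degree plus `z`-degree at least `2`.
    (hnnc : ∀ α : Fin 3 →₀ ℕ, MvPowerSeries.coeff α f ≠ 0 → α ≠ Finsupp.single 0 k →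
      2 ≤ α 1 + α 2) :
    compPS (pdPS 1 f) pathX = 0 ∧
    compPS (pdPS 2 f) pathX = 0 ∧
    (compPS (pdPS 0 f) pathX).order = (k - 1 : ℕ) ∧
    -- consequently `L₀(f) ≥ k − 1`, witnessed by a path:
    ∃ Φ : Fin 3 → PowerSeries ℂ, (∀ i, PowerSeries.constantCoeff (Φ i) = 0) ∧
      (∃ i, Φ i ≠ 0) ∧
      ((k : ℕ∞) - 1) * (⨅ i, (Φ i).order) ≤ ⨅ i, (compPS (pdPS i f) Φ).order :=
  stmt_19_general f k hk e he hcoeff hnnc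
end
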